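/- Let φ : ℝ^d → ℂ be a smooth function. Then the following are equivalent: (i) there exists h > 0 such that sup_{k∈ℕ₀^d} sup_{x∈ℝ^d} |∂^kφ(x)|/(h^{|k|} M_k) < ∞; (ii) for every (r_p) ∈ ℜ one has sup_{k∈ℕ₀^d} sup_{x∈ℝ^d} |∂^kφ(x)|/(R_{|k|} M_k) < ∞. -/

import Mathlib

open scoped ENNReal BigOperators

noncomputable section

/-- `ℝ^d` modeled as Euclidean space. -/
abbrev Euc (d : ℕ) := EuclideanSpace ℝ (Fin d)

/-- The partial derivative `∂_i φ` of a function `φ : ℝ^d → ℂ`. -/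
noncomputable def pderivI {d : ℕ} (i : Fin d) (φ : Euc d → ℂ) : Euc d → ℂ :=
  fun x => fderiv ℝ φ x (EuclideanSpace.single i 1)

/-- The multi-index partial derivative `∂^k φ = ∂_1^{k_1} ⋯ ∂_d^{k_d} φ`. -/
noncomputable def mderiv {d : ℕ} (k : Fin d → ℕ) (φ : Euc d → ℂ) : Euc d → ℂ :=
  (List.finRange d).foldr (fun i ψ => (pderivI i)^[k i] ψ) φ

/-- The class ℜ of sequences with `r 0 = 1` monotonically increasing to infinity. -/
def RClass (r : ℕ → ℝ) : Prop :=
  r 0 = 1 ∧ Monotone r ∧ Filter.Tendsto r Filter.atTop Filter.atTop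

/-- The product sequence `R_p = ∏_{i=0}^p r_i`. -/
noncomputable def prodSeq (r : ℕ → ℝ) (p : ℕ) : ℝ :=
  ∏ i ∈ Finset.range (p + 1), r i

/-- The seminorm `q_{K,h}(φ)`, with values in `[0,∞]`. -/
noncomputable def qnormK {d : ℕ} (M : ℕ → ℝ) (K : Set (Euc d)) (h : ℝ)
    (φ : Euc d → ℂ) : ℝ≥0∞ :=
  ⨆ (k : Fin d → ℕ) (x : K), ENNReal.ofReal (‖mderiv k φ x‖ / (h ^ (∑ i, k i) * M (∑ i, k i)))

/-- The seminorm `sup_{k,x∈K} |∂^k φ(x)|/(R_{|k|} M_k)`, with values in `[0,∞]`. -/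
noncomputable def qrnormK {d : ℕ} (M : ℕ → ℝ) (r : ℕ → ℝ) (K : Set (Euc d))
    (φ : Euc d → ℂ) : ℝ≥0∞ :=
  ⨆ (k : Fin d → ℕ) (x : K),
    ENNReal.ofReal (‖mderiv k φ x‖ / (prodSeq r (∑ i, k i) * M (∑ i, k i)))

/-- The norm `‖φ‖_{∞,h}`, with values in `[0,∞]`. -/
noncomputable def hnorm {d : ℕ} (M : ℕ → ℝ) (h : ℝ) (φ : Euc d → ℂ) : ℝ≥0∞ :=
  ⨆ (k : Fin d → ℕ) (x : Euc d),
    ENNReal.ofReal (‖mderiv k φ x‖ / (h ^ (∑ i, k i) * M (∑ i, k i)))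

/-- The norm `‖φ‖_{(r_p)}`, with values in `[0,∞]`. -/
noncomputable def rnorm {d : ℕ} (M : ℕ → ℝ) (r : ℕ → ℝ) (φ : Euc d → ℂ) : ℝ≥0∞ :=
  ⨆ (k : Fin d → ℕ) (x : Euc d),
    ENNReal.ofReal (‖mderiv k φ x‖ / (prodSeq r (∑ i, k i) * M (∑ i, k i)))

/-- Membership in the space `D^{{M_p}}` of Roumieu test functions. -/
def IsDMp {d : ℕ} (M : ℕ → ℝ) (φ : Euc d → ℂ) : Prop :=
  ContDiff ℝ (⊤ : ℕ∞) φ ∧ HasCompactSupport φ ∧ ∃ h > 0, hnorm M h φ < ⊤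

/-- `T` is a ℂ-linear functional on `D^{{M_p}}`. -/
def LinearOnD {d : ℕ} (M : ℕ → ℝ) (T : (Euc d → ℂ) → ℂ) : Prop :=
  (∀ φ ψ, IsDMp M φ → IsDMp M ψ → T (φ + ψ) = T φ + T ψ) ∧
  (∀ (c : ℂ) (φ), IsDMp M φ → T (c • φ) = c * T φ)

/-- `T` is a Roumieu ultradistribution. -/
def IsRoumieuUD {d : ℕ} (M : ℕ → ℝ) (T : (Euc d → ℂ) → ℂ) : Prop :=
  ∀ K : Set (Euc d), IsCompact K →
    ∃ s, RClass s ∧ ∃ C > 0, ∀ φ, IsDMp M φ → tsupport φ ⊆ K →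
      ENNReal.ofReal ‖T φ‖ ≤ ENNReal.ofReal C * rnorm M s φ

/-- `u` is an ℜ-approximate unit. -/
def IsRApproxUnit {d : ℕ} (M : ℕ → ℝ) (u : ℕ → Euc d → ℂ) : Prop :=
  (∀ n, IsDMp M (u n)) ∧
  (∀ r, RClass r → (⨆ n, rnorm M r (u n)) < ⊤) ∧
  (∀ K : Set (Euc d), IsCompact K → ∃ h > 0,
    Filter.Tendsto (fun n => qnormK M K h (fun x => u n x - 1)) Filter.atTop (nhds 0))

/-- `u` is a special ℜ-approximate unit. -/
def IsSpecialRApproxUnit {d : ℕ} (M : ℕ → ℝ) (u : ℕ → Euc d → ℂ) : Prop :=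
  IsRApproxUnit M u ∧
  ∀ K : Set (Euc d), IsCompact K → ∃ n₀, ∀ n ≥ n₀, ∀ x ∈ K, u n x = 1

/-- Condition (M.1): `M_p^2 ≤ M_{p-1} M_{p+1}` for `p ≥ 1`. -/
def CondM1 (M : ℕ → ℝ) : Prop := ∀ p : ℕ, M (p + 1) ^ 2 ≤ M p * M (p + 2)

/-- Condition (M.2). -/
def CondM2 (M : ℕ → ℝ) : Prop :=
  ∃ A > 0, ∃ H ≥ (1 : ℝ), ∀ p q : ℕ, q ≤ p → M p ≤ A * H ^ p * M q * M (p - q)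

/-- Condition (M.3). -/
def CondM3 (M : ℕ → ℝ) : Prop :=
  ∃ A > 0, ∀ q : ℕ, 1 ≤ q →
    ∑' p : ℕ, M (q + p) / M (q + p + 1) ≤ A * q * M q / M (q + 1)

lemma RClass.one_le {r : ℕ → ℝ} (hr : RClass r) (i : ℕ) : 1 ≤ r i :=
  hr.1 ▸ hr.2.1 (Nat.zero_le i)

lemma RClass.prod_pos {r : ℕ → ℝ} (hr : RClass r) (p : ℕ) : 0 < prodSeq r p :=
  Finset.prod_pos fun i _ => lt_of_lt_of_le one_pos (hr.one_le i)

lemma one_le_prod_of (s : Finset ℕ) (f : ℕ → ℝ) (hf : ∀ i ∈ s, 1 ≤ f i) :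
    1 ≤ ∏ i ∈ s, f i := by
  calc (1:ℝ) = ∏ _i ∈ s, (1:ℝ) := (Finset.prod_const_one).symm
    _ ≤ ∏ i ∈ s, f i := Finset.prod_le_prod (fun i _ => zero_le_one) hf

lemma RClass.one_le_prod {r : ℕ → ℝ} (hr : RClass r) (p : ℕ) : 1 ≤ prodSeq r p :=
  one_le_prod_of _ _ fun i _ => hr.one_le i

/-- Abstract Komatsu lemma. -/
lemma komatsu_abstract (A : ℕ → ℝ≥0∞) :
    (∃ h > (0:ℝ), (⨆ p, A p / ENNReal.ofReal (h ^ p)) < ⊤) ↔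
    (∀ r, RClass r → (⨆ p, A p / ENNReal.ofReal (prodSeq r p)) < ⊤) := by
  constructor
  · rintro ⟨h, hh, hS⟩ r hr
    set S := ⨆ p, A p / ENNReal.ofReal (h ^ p) with hSdef
    -- find N with h ≤ r i for i ≥ N
    obtain ⟨N, hN⟩ := (hr.2.2.eventually_ge_atTop h).exists_forall_of_atTop
    set D : ℝ := max 1 h ^ N with hD
    have hDpos : (0:ℝ) < D := pow_pos (lt_of_lt_of_le one_pos (le_max_left _ _)) N
    have hbound : ∀ p, h ^ p ≤ D * prodSeq r p := by
      intro p
      rcases le_or_gt p N with hpN | hpN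
      · have h1 : h ^ p ≤ max 1 h ^ p := pow_le_pow_left₀ (le_of_lt hh) (le_max_right _ _) p
        have h2 : max 1 h ^ p ≤ D := pow_le_pow_right₀ (le_max_left _ _) hpN
        calc h ^ p ≤ D := h1.trans h2
          _ = D * 1 := (mul_one D).symm
          _ ≤ D * prodSeq r p := by
              exact mul_le_mul_of_nonneg_left (hr.one_le_prod p) hDpos.le
      · -- p > N
        have hsplit : prodSeq r p
            = (∏ i ∈ Finset.range (N+1), r i) * ∏ i ∈ Finset.Ico (N+1) (p+1), r i := by
          rw [prodSeq, ← Finset.prod_range_mul_prod_Ico r (by omega : N+1 ≤ p+1)]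
        have h1 : (1:ℝ) ≤ ∏ i ∈ Finset.range (N+1), r i :=
          one_le_prod_of _ _ fun i _ => hr.one_le i
        have h2 : h ^ (p - N) ≤ ∏ i ∈ Finset.Ico (N+1) (p+1), r i := by
          have : ∏ i ∈ Finset.Ico (N+1) (p+1), h ≤ ∏ i ∈ Finset.Ico (N+1) (p+1), r i :=
            Finset.prod_le_prod (fun i _ => hh.le) (fun i hi => by
              have : N ≤ i := by
                simp only [Finset.mem_Ico] at hi; omega
              exact hN i this)
          simpa [Nat.card_Ico, show p + 1 - (N+1) = p - N by omega] using this
        have h3 : h ^ p = h ^ N * h ^ (p - N) := by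
          rw [← pow_add]; congr 1; omega
        calc h ^ p = h ^ N * h ^ (p - N) := h3
          _ ≤ D * (1 * h ^ (p - N)) := by
              rw [one_mul]
              exact mul_le_mul_of_nonneg_right (by
                exact pow_le_pow_left₀ hh.le (le_max_right 1 h) N)
                (pow_nonneg hh.le _)
          _ ≤ D * ((∏ i ∈ Finset.range (N+1), r i) * ∏ i ∈ Finset.Ico (N+1) (p+1), r i) := by
              apply mul_le_mul_of_nonneg_left _ hDpos.le
              exact mul_le_mul h1 h2 (pow_nonneg hh.le _)
                (le_trans zero_le_one h1)
          _ = D * prodSeq r p := by rw [hsplit]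
    have key : ∀ p, A p / ENNReal.ofReal (prodSeq r p) ≤ S * ENNReal.ofReal D := by
      intro p
      have hApS : A p / ENNReal.ofReal (h ^ p) ≤ S := le_iSup (fun p => A p / ENNReal.ofReal (h ^ p)) p
      have hpow0 : ENNReal.ofReal (h ^ p) ≠ 0 :=
        (ENNReal.ofReal_pos.mpr (pow_pos hh p)).ne'
      have hpowt : ENNReal.ofReal (h ^ p) ≠ ⊤ := ENNReal.ofReal_ne_top
      have hAp : A p ≤ S * ENNReal.ofReal (h ^ p) := (ENNReal.div_le_iff hpow0 hpowt).mp hApS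
      calc A p / ENNReal.ofReal (prodSeq r p)
          ≤ S * ENNReal.ofReal (h ^ p) / ENNReal.ofReal (prodSeq r p) :=
            ENNReal.div_le_div_right hAp _
        _ = S * (ENNReal.ofReal (h ^ p) / ENNReal.ofReal (prodSeq r p)) := by
            rw [mul_div_assoc]
        _ ≤ S * ENNReal.ofReal D := by
            apply mul_le_mul_right
            rw [← ENNReal.ofReal_div_of_pos (hr.prod_pos p)]
            apply ENNReal.ofReal_le_ofReal
            rw [div_le_iff₀ (hr.prod_pos p)]
            calc h ^ p ≤ D * prodSeq r p := hbound p
              _ = D * prodSeq r p := rfl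
    calc (⨆ p, A p / ENNReal.ofReal (prodSeq r p)) ≤ S * ENNReal.ofReal D := iSup_le key
      _ < ⊤ := ENNReal.mul_lt_top hS ENNReal.ofReal_lt_top
  · intro H
    by_contra hcon
    push_neg at hcon
    -- each A p is finite
    have hr1 : RClass (fun p => (p : ℝ) + 1) := by
      refine ⟨by norm_num, fun a b hab => by push_cast; simp [hab], ?_⟩
      exact Filter.tendsto_atTop_add_const_right _ 1 tendsto_natCast_atTop_atTop
    have hfin : ∀ p, A p < ⊤ := by
      intro p
      have hS := H _ hr1
      have h1 : A p / ENNReal.ofReal (prodSeq (fun q => (q:ℝ)+1) p) < ⊤ :=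
        lt_of_le_of_lt (le_iSup (fun q => A q / ENNReal.ofReal (prodSeq (fun q => (q:ℝ)+1) q)) p) hS
      by_contra htop
      push_neg at htop
      rw [top_le_iff] at htop
      rw [htop, ENNReal.top_div_of_ne_top ENNReal.ofReal_ne_top] at h1
      exact absurd h1 (lt_irrefl ⊤)
    -- for each n ≥ 1 and P, find p > P with A p > ofReal(n^(p+2))
    have step : ∀ n P : ℕ, ∃ p, P < p ∧ ENNReal.ofReal (((n:ℝ)+1) ^ (p + 2)) < A p := by
      intro n P
      have hn1 : (0:ℝ) < (n:ℝ) + 1 := by positivity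
      have htop : (⨆ p, A p / ENNReal.ofReal (((n:ℝ)+1) ^ p)) = ⊤ := by
        exact top_le_iff.mp (hcon ((n:ℝ)+1) hn1)
      set B : ℝ≥0∞ := ((Finset.range (P+1)).sup fun p => A p / ENNReal.ofReal (((n:ℝ)+1) ^ p))
        ⊔ ENNReal.ofReal (((n:ℝ)+1) ^ 2) with hB
      have hBlt : B < ⊤ := by
        rw [hB, sup_lt_iff]
        constructor
        · apply Finset.sup_lt_iff (by simp : (⊥:ℝ≥0∞) < ⊤) |>.mpr
          intro p _
          exact ENNReal.div_lt_top (hfin p).ne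
            (by simp [ENNReal.ofReal_eq_zero, not_le.mpr (pow_pos hn1 p)])
        · exact ENNReal.ofReal_lt_top
      obtain ⟨p, hp⟩ := lt_iSup_iff.mp (htop ▸ hBlt)
      refine ⟨p, ?_, ?_⟩
      · by_contra hpP
        push_neg at hpP
        have : A p / ENNReal.ofReal (((n:ℝ)+1) ^ p) ≤ B :=
          le_sup_of_le_left (Finset.le_sup (f := fun q => A q / ENNReal.ofReal (((n:ℝ)+1) ^ q)) (Finset.mem_range.mpr (by omega)))
        exact absurd hp (not_lt.mpr this)
      · have h2 : ENNReal.ofReal (((n:ℝ)+1) ^ 2) < A p / ENNReal.ofReal (((n:ℝ)+1) ^ p) :=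
          lt_of_le_of_lt le_sup_right hp
        have hc0 : ENNReal.ofReal (((n:ℝ)+1) ^ p) ≠ 0 := by
          simp [ENNReal.ofReal_eq_zero, not_le.mpr (pow_pos hn1 p)]
        have hct : ENNReal.ofReal (((n:ℝ)+1) ^ p) ≠ ⊤ := ENNReal.ofReal_ne_top
        have := ENNReal.mul_lt_mul_left hc0 hct h2
        rw [ENNReal.div_mul_cancel hc0 hct] at this
        calc ENNReal.ofReal (((n:ℝ)+1) ^ (p+2))
            = ENNReal.ofReal (((n:ℝ)+1) ^ 2) * ENNReal.ofReal (((n:ℝ)+1) ^ p) := by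
              rw [← ENNReal.ofReal_mul (by positivity), ← pow_add]; ring_nf
          _ < A p := this
    choose g hg1 hg2 using step
    set ps : ℕ → ℕ := fun j => Nat.rec (g 0 0) (fun j pj => g (j+1) pj) j with hps
    have hps_succ : ∀ j, ps (j+1) = g (j+1) (ps j) := fun j => rfl
    have hmono : StrictMono ps :=
      strictMono_nat_of_lt_succ (fun j => by rw [hps_succ]; exact hg1 (j+1) (ps j))
    have hA : ∀ j : ℕ, ENNReal.ofReal (((j:ℝ)+1) ^ (ps j + 2)) < A (ps j) := by
      intro j
      cases j with
      | zero => exact hg2 0 0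
      | succ j => rw [hps_succ]; push_cast; exact_mod_cast hg2 (j+1) (ps j)
    set r : ℕ → ℝ :=
      fun i => 1 + (((Finset.range i).filter (fun j => ps j < i)).card : ℝ) with hrdef
    have hrbound : ∀ j i, i ≤ ps j → r i ≤ (j:ℝ) + 1 := by
      intro j i hij
      have hsub : (Finset.range i).filter (fun j' => ps j' < i) ⊆ Finset.range j := by
        intro j' hj'
        simp only [Finset.mem_filter, Finset.mem_range] at hj' ⊢
        have : ps j' < ps j := lt_of_lt_of_le hj'.2 hij
        exact hmono.lt_iff_lt.mp this
      have := Finset.card_le_card hsub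
      rw [Finset.card_range] at this
      rw [hrdef]
      have h5 : ((((Finset.range i).filter (fun j' => ps j' < i)).card : ℝ)) ≤ (j : ℝ) :=
        Nat.cast_le.mpr this
      simp only
      linarith
    have hrR : RClass r := by
      refine ⟨by simp [hrdef], ?_, ?_⟩
      · intro a b hab
        rw [hrdef]
        simp only [add_le_add_iff_left, Nat.cast_le]
        apply Finset.card_le_card
        intro j' hj'
        simp only [Finset.mem_filter, Finset.mem_range] at hj' ⊢
        omega
      · apply Monotone.tendsto_atTop_atTop
        · intro a b hab
          rw [hrdef]
          simp only [add_le_add_iff_left, Nat.cast_le]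
          apply Finset.card_le_card
          intro j' hj'
          simp only [Finset.mem_filter, Finset.mem_range] at hj' ⊢
          omega
        · intro b
          set N := ⌈b⌉₊ with hNdef
          refine ⟨ps N + 1, ?_⟩
          have hsub : Finset.range (N+1) ⊆
              (Finset.range (ps N + 1)).filter (fun j' => ps j' < ps N + 1) := by
            intro j' hj'
            simp only [Finset.mem_range] at hj'
            have h1 : ps j' ≤ ps N := hmono.monotone (by omega)
            simp only [Finset.mem_filter, Finset.mem_range]
            have h2 : j' ≤ ps j' := hmono.le_apply
            omega
          have hcard := Finset.card_le_card hsub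
          rw [Finset.card_range] at hcard
          have h3 : b ≤ (N : ℝ) := Nat.le_ceil b
          have h4 : ((N:ℝ) + 1 : ℝ) ≤ (((Finset.range (ps N + 1)).filter
              (fun j' => ps j' < ps N + 1)).card : ℝ) := by exact_mod_cast hcard
          rw [hrdef]
          simp only
          linarith
    have hprodbound : ∀ j, prodSeq r (ps j) ≤ ((j:ℝ)+1) ^ (ps j + 1) := by
      intro j
      calc prodSeq r (ps j) = ∏ i ∈ Finset.range (ps j + 1), r i := rfl
        _ ≤ ∏ _i ∈ Finset.range (ps j + 1), ((j:ℝ)+1) :=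
            Finset.prod_le_prod (fun i _ => le_trans zero_le_one (hrR.one_le i))
              (fun i hi => hrbound j i (by simpa [Nat.lt_succ_iff] using hi))
        _ = ((j:ℝ)+1) ^ (ps j + 1) := by rw [Finset.prod_const, Finset.card_range]
    have hS := H r hrR
    have hge : ∀ j : ℕ, ENNReal.ofReal ((j:ℝ)+1) ≤ ⨆ p, A p / ENNReal.ofReal (prodSeq r p) := by
      intro j
      have hjpos : (0:ℝ) < (j:ℝ)+1 := by positivity
      have h1 : ENNReal.ofReal (((j:ℝ)+1) ^ (ps j + 2)) / ENNReal.ofReal (((j:ℝ)+1) ^ (ps j + 1))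
          ≤ A (ps j) / ENNReal.ofReal (prodSeq r (ps j)) :=
        ENNReal.div_le_div (hA j).le (ENNReal.ofReal_le_ofReal (hprodbound j))
      have h2 : ENNReal.ofReal (((j:ℝ)+1) ^ (ps j + 2)) / ENNReal.ofReal (((j:ℝ)+1) ^ (ps j + 1))
          = ENNReal.ofReal ((j:ℝ)+1) := by
        rw [← ENNReal.ofReal_div_of_pos (pow_pos hjpos _)]
        congr 1
        rw [pow_succ ((j:ℝ)+1) (ps j + 1)]
        field_simp
      rw [h2] at h1
      exact le_trans h1 (le_iSup (fun p => A p / ENNReal.ofReal (prodSeq r p)) (ps j))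
    obtain ⟨j, hj⟩ := exists_nat_gt (⨆ p, A p / ENNReal.ofReal (prodSeq r p)).toReal
    have hmon := ENNReal.toReal_mono hS.ne (hge j)
    rw [ENNReal.toReal_ofReal (by positivity)] at hmon
    linarith


lemma iSup_rearrange {d : ℕ} (f : (Fin d → ℕ) → Euc d → ℝ≥0∞) (c : ℕ → ℝ≥0∞) :
    (⨆ (k : Fin d → ℕ) (x : Euc d), f k x / c (∑ i, k i)) =
    ⨆ p, (⨆ (k : Fin d → ℕ) (x : Euc d) (_ : (∑ i, k i) = p), f k x) / c p := by
  apply le_antisymm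
  · refine iSup_le fun k => iSup_le fun x => ?_
    refine le_trans ?_ (le_iSup (fun p => (⨆ (k : Fin d → ℕ) (x : Euc d)
      (_ : (∑ i, k i) = p), f k x) / c p) (∑ i, k i))
    refine ENNReal.div_le_div_right ?_ _
    exact le_iSup_of_le k (le_iSup_of_le x (le_iSup_of_le rfl le_rfl))
  · refine iSup_le fun p => ?_
    rw [ENNReal.iSup_div]
    refine iSup_le fun k => ?_
    rw [ENNReal.iSup_div]
    refine iSup_le fun x => ?_
    rw [ENNReal.iSup_div]
    refine iSup_le fun hp => ?_
    rw [← hp]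
    exact le_iSup_of_le k (le_iSup (fun x => f k x / c (∑ i, k i)) x)

lemma hnorm_eq' {d : ℕ} (M : ℕ → ℝ) {h : ℝ} (hh : 0 < h) (φ : Euc d → ℂ) :
    hnorm M h φ = ⨆ p, (⨆ (k : Fin d → ℕ) (x : Euc d) (_ : (∑ i, k i) = p),
      ENNReal.ofReal (‖mderiv k φ x‖ / M (∑ i, k i))) / ENNReal.ofReal (h ^ p) := by
  have e1 : hnorm M h φ = ⨆ (k : Fin d → ℕ) (x : Euc d),
      ENNReal.ofReal (‖mderiv k φ x‖ / M (∑ i, k i)) / ENNReal.ofReal (h ^ (∑ i, k i)) := by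
    simp only [hnorm]
    congr 1
    funext k
    congr 1
    funext x
    rw [mul_comm, div_mul_eq_div_div, ENNReal.ofReal_div_of_pos (pow_pos hh _)]
  rw [e1]
  exact iSup_rearrange (fun k x => ENNReal.ofReal (‖mderiv k φ x‖ / M (∑ i, k i)))
    (fun p => ENNReal.ofReal (h ^ p))

lemma rnorm_eq' {d : ℕ} (M : ℕ → ℝ) {r : ℕ → ℝ} (hr : RClass r) (φ : Euc d → ℂ) :
    rnorm M r φ = ⨆ p, (⨆ (k : Fin d → ℕ) (x : Euc d) (_ : (∑ i, k i) = p),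
      ENNReal.ofReal (‖mderiv k φ x‖ / M (∑ i, k i))) / ENNReal.ofReal (prodSeq r p) := by
  have e1 : rnorm M r φ = ⨆ (k : Fin d → ℕ) (x : Euc d),
      ENNReal.ofReal (‖mderiv k φ x‖ / M (∑ i, k i))
        / ENNReal.ofReal (prodSeq r (∑ i, k i)) := by
    simp only [rnorm]
    congr 1
    funext k
    congr 1
    funext x
    rw [mul_comm, div_mul_eq_div_div, ENNReal.ofReal_div_of_pos (hr.prod_pos _)]
  rw [e1]
  exact iSup_rearrange (fun k x => ENNReal.ofReal (‖mderiv k φ x‖ / M (∑ i, k i)))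
    (fun p => ENNReal.ofReal (prodSeq r p))

/-- Komatsu's lemma for the global sup-norms. -/
theorem stmt6 {d : ℕ} (M : ℕ → ℝ) (hMpos : ∀ p, 0 < M p) (hM0 : M 0 = 1)
    (φ : Euc d → ℂ) (hφ : ContDiff ℝ (⊤ : ℕ∞) φ) :
    (∃ h > 0, hnorm M h φ < ⊤) ↔ (∀ r, RClass r → rnorm M r φ < ⊤) := by
  have key := komatsu_abstract (fun p => ⨆ (k : Fin d → ℕ) (x : Euc d) (_ : (∑ i, k i) = p),
    ENNReal.ofReal (‖mderiv k φ x‖ / M (∑ i, k i)))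
  constructor
  · rintro ⟨h, hh, hfin⟩ r hr
    rw [rnorm_eq' M hr φ]
    refine key.mp ⟨h, hh, ?_⟩ r hr
    rw [← hnorm_eq' M hh φ]
    exact hfin
  · intro H
    obtain ⟨h, hh, hfin⟩ := key.mpr (fun r hr => by
      rw [← rnorm_eq' M hr φ]; exact H r hr)
    refine ⟨h, hh, ?_⟩
    rw [hnorm_eq' M hh φ]
    exact hfin
end
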